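/- For a connected weighted graph with stationary distribution π = D1 / (1^T D 1), the vector L^+ (1_u - π) equals (1/2) Π D^{-1} sum_{t=0}^∞ ( X^t 1_u - π ), where X = (1/2)I + (1/2) A D^{-1} is the lazy random walk matrix and Π = I - (1/n) 1 1^T, and the series converges. -/

import Mathlib

/-!
The lazy walk `X = ½ (1 + A D⁻¹)` is similar, via `D^{1/2}`, to the symmetric matrix
`S = ½ D^{-1/2} (D + A) D^{-1/2}`. Both `D + A` and `L = D - A` are positive semidefinite
(their quadratic forms are `½ ∑ A i j (x i ± x j)²`), so the spectrum of `S` lies in `[0, 1]`, and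
by connectivity the eigenvectors of `S` for the eigenvalue `1` are the multiples of `D^{1/2} 1`,
which is orthogonal to `D^{-1/2} (1_u - π)`. Since `X π = π`, the terms of the series are
`X^t (1_u - π)`, so the series converges geometrically; its sum `T` satisfies
`(1 - X) T = 1_u - π`, i.e. `L (½ D⁻¹ T) = 1_u - π`. Applying `L⁺` gives the claim, because
`L⁺ L` is the orthogonal projection `Π` onto `1^⊥`.
-/

open Matrix BigOperators Finset

section

variable {ι : Type*} [Fintype ι]

theorem HasSum.matrix_mulVec {κ : Type*} {f : ℕ → ι → ℝ} {a : ι → ℝ} (hf : HasSum f a)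
    (M : Matrix κ ι ℝ) : HasSum (fun t => M *ᵥ f t) (M *ᵥ a) :=
  hf.map M.mulVecLin (continuous_const.matrix_mulVec continuous_id)

theorem Matrix.PosSemidef.nonneg_of_mulVec_eq_smul {M : Matrix ι ι ℝ} (hM : M.PosSemidef)
    {v : ι → ℝ} (hv : v ≠ 0) {μ : ℝ} (h : M *ᵥ v = μ • v) : 0 ≤ μ := by
  have hquad := hM.dotProduct_mulVec_nonneg v
  rw [h, dotProduct_smul, smul_eq_mul] at hquad
  exact nonneg_of_mul_nonneg_left hquad (dotProduct_star_self_pos_iff.mpr hv)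

variable [DecidableEq ι]

theorem Matrix.sub_mulVec_eq_of_hasSum_pow_mulVec {M : Matrix ι ι ℝ} {v T : ι → ℝ}
    (h : HasSum (fun t : ℕ => (M ^ t) *ᵥ v) T) : T - M *ᵥ T = v := by
  have hshift : HasSum (fun t : ℕ => (M ^ (t + 1)) *ᵥ v) (M *ᵥ T) := by
    simpa only [pow_succ', ← mulVec_mulVec] using h.matrix_mulVec M
  have htail : HasSum (fun t : ℕ => (M ^ (t + 1)) *ᵥ v) (T - v) := by
    simpa using (hasSum_nat_add_iff' 1).mpr h
  rw [hshift.unique htail, sub_sub_cancel]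

theorem Matrix.IsHermitian.eigenvalues_le_one {S : Matrix ι ι ℝ} (hS : S.IsHermitian)
    (hS' : (1 - S).PosSemidef) (i : ι) : hS.eigenvalues i ≤ 1 := by
  refine sub_nonneg.mp (hS'.nonneg_of_mulVec_eq_smul (v := ⇑(hS.eigenvectorBasis i)) ?_ ?_)
  · exact fun h => hS.eigenvectorBasis.orthonormal.ne_zero i (by ext j; simp [h])
  · rw [sub_mulVec, one_mulVec, hS.mulVec_eigenvectorBasis, sub_smul, one_smul]

theorem Matrix.IsHermitian.summable_pow_mulVec {S : Matrix ι ι ℝ} (hS : S.IsHermitian)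
    (hev : ∀ i, hS.eigenvalues i ∈ Set.Ioc (-1) 1) {z : ι → ℝ}
    (hz : ∀ v, S *ᵥ v = v → v ⬝ᵥ z = 0) : Summable fun t : ℕ => (S ^ t) *ᵥ z := by
  have hexp : z = ∑ i, (⇑(hS.eigenvectorBasis i) ⬝ᵥ z) • ⇑(hS.eigenvectorBasis i) := by
    have := congrArg WithLp.ofLp (hS.eigenvectorBasis.sum_repr' (WithLp.toLp 2 z))
    simpa [EuclideanSpace.inner_eq_star_dotProduct, dotProduct_comm] using this.symm
  have hpow : ∀ (t : ℕ) i, (S ^ t) *ᵥ ⇑(hS.eigenvectorBasis i)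
      = hS.eigenvalues i ^ t • ⇑(hS.eigenvectorBasis i) := by
    intro t i
    induction t with
    | zero => simp
    | succ t ih => rw [pow_succ, ← mulVec_mulVec, hS.mulVec_eigenvectorBasis, mulVec_smul, ih,
        smul_smul, pow_succ']
  rw [hexp]
  simp_rw [mulVec_sum, mulVec_smul, hpow, smul_smul]
  refine summable_sum fun i _ => ?_
  rcases (hev i).2.eq_or_lt with h1 | hlt
  · have h0 := hz _ (by rw [hS.mulVec_eigenvectorBasis, h1, one_smul])
    simp [h0]
  · have habs : |hS.eigenvalues i| < 1 := abs_lt.mpr ⟨(hev i).1, hlt⟩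
    exact ((summable_geometric_of_abs_lt_one habs).mul_left _).smul_const
      (hS.eigenvectorBasis i : ι → ℝ)

theorem Matrix.mul_eq_one_sub_of_ker_eq_const {L Lp : Matrix ι ι ℝ} (hLLpL : L * Lp * L = L)
    (hLpL : (Lp * L).IsSymm) (hL1 : L *ᵥ (fun _ => 1) = 0)
    (hker : ∀ x, L *ᵥ x = 0 → ∃ c : ℝ, ∀ i, x i = c) :
    Lp * L = 1 - (Fintype.card ι : ℝ)⁻¹ • of fun _ _ => 1 := by
  -- The columns of `Lp * L - 1` lie in `ker L`, so they are constant; the column sums of `Lp * L`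
  -- vanish by symmetry, which pins that constant down to `-1 / card ι`.
  have hcol : ∀ j, ∃ c : ℝ, ∀ i, (Lp * L - 1) i j = c := by
    intro j
    refine hker _ (funext fun i => ?_)
    have h : L * (Lp * L - 1) = 0 := by
      rw [Matrix.mul_sub, ← Matrix.mul_assoc, hLLpL, mul_one, sub_self]
    exact congrFun (congrFun h i) j
  have hcolsum : ∀ j, ∑ i, (Lp * L) i j = 0 := by
    intro j
    have h : (Lp * L) *ᵥ (fun _ => 1) = 0 := by rw [← mulVec_mulVec, hL1, mulVec_zero]
    simpa [mulVec, dotProduct, hLpL.apply] using congrFun h j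
  ext i j
  obtain ⟨c, hc⟩ := hcol j
  have : Nonempty ι := ⟨i⟩
  have hcard : (Fintype.card ι : ℝ) * c = -1 := by
    calc (Fintype.card ι : ℝ) * c = ∑ k, (Lp * L - 1) k j := by simp [hc]
      _ = -1 := by simp [sub_apply, sum_sub_distrib, hcolsum j, one_apply]
  have hc' : c = -(Fintype.card ι : ℝ)⁻¹ := by
    have hn : (Fintype.card ι : ℝ) ≠ 0 := by positivity
    field_simp
    linarith
  have hci := hc i
  rw [sub_apply] at hci
  rw [sub_apply, smul_apply, of_apply, smul_eq_mul, mul_one]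
  linarith

end

noncomputable section

namespace WeightedGraph

variable {ι : Type*} [Fintype ι]

def degrees (A : Matrix ι ι ℝ) : ι → ℝ := fun i => ∑ j, A i j

def stationary (A : Matrix ι ι ℝ) : ι → ℝ := fun i => degrees A i / ∑ i, degrees A i

def sqrtDegrees (A : Matrix ι ι ℝ) : ι → ℝ := fun i => √(degrees A i)

variable {A : Matrix ι ι ℝ}

theorem sqrtDegrees_ne_zero (hpos : ∀ i, 0 < degrees A i) (i : ι) : sqrtDegrees A i ≠ 0 :=
  (Real.sqrt_pos.mpr (hpos i)).ne'

theorem sqrtDegrees_mul_self (hpos : ∀ i, 0 < degrees A i) (i : ι) :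
    sqrtDegrees A i * sqrtDegrees A i = degrees A i :=
  Real.mul_self_sqrt (hpos i).le

theorem sum_stationary [Nonempty ι] (hpos : ∀ i, 0 < degrees A i) : ∑ i, stationary A i = 1 := by
  simp only [stationary]
  rw [← sum_div, div_self (sum_pos (fun i _ => hpos i) univ_nonempty).ne']

variable [DecidableEq ι]

def laplacian (A : Matrix ι ι ℝ) : Matrix ι ι ℝ := diagonal (degrees A) - A

def lazyWalk (A : Matrix ι ι ℝ) : Matrix ι ι ℝ :=
  (1 / 2 : ℝ) • 1 + (1 / 2 : ℝ) • (A * diagonal fun i => (degrees A i)⁻¹)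

def symLazyWalk (A : Matrix ι ι ℝ) : Matrix ι ι ℝ :=
  (1 / 2 : ℝ) •
    (diagonal (sqrtDegrees A)⁻¹ * (diagonal (degrees A) + A) * diagonal (sqrtDegrees A)⁻¹)

theorem dotProduct_diagonal_degrees_add_smul_mulVec (hA : A.IsSymm) {σ : ℝ} (hσ : σ * σ = 1)
    (x : ι → ℝ) :
    x ⬝ᵥ ((diagonal (degrees A) + σ • A) *ᵥ x)
      = (1 / 2) * ∑ i, ∑ j, A i j * (x i + σ * x j) ^ 2 := by
  have hswap : ∑ i, ∑ j, A i j * x j ^ 2 = ∑ i, ∑ j, A i j * x i ^ 2 := by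
    rw [Finset.sum_comm]; simp_rw [hA.apply]
  have hexpand : ∀ i j, A i j * (x i + σ * x j) ^ 2
      = A i j * x i ^ 2 + A i j * x j ^ 2 + 2 * σ * (x i * (A i j * x j)) := by
    intro i j; linear_combination (A i j * x j ^ 2) * hσ
  have hdiag : x ⬝ᵥ (diagonal (degrees A) *ᵥ x) = ∑ i, ∑ j, A i j * x i ^ 2 := by
    simp only [dotProduct, mulVec_diagonal, degrees, sum_mul, mul_sum]
    exact sum_congr rfl fun i _ => sum_congr rfl fun j _ => by ring
  have hoff : x ⬝ᵥ (A *ᵥ x) = ∑ i, ∑ j, x i * (A i j * x j) := by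
    simp only [dotProduct, mulVec, mul_sum]
  rw [add_mulVec, smul_mulVec, dotProduct_add, dotProduct_smul, hdiag, hoff, smul_eq_mul]
  simp only [hexpand, sum_add_distrib, hswap, ← mul_sum]
  ring

theorem posSemidef_diagonal_degrees_add_smul (hA : A.IsSymm) (hnonneg : ∀ i j, 0 ≤ A i j)
    {σ : ℝ} (hσ : σ * σ = 1) : (diagonal (degrees A) + σ • A).PosSemidef := by
  refine .of_dotProduct_mulVec_nonneg ?_ fun x => ?_
  · rw [isHermitian_iff_isSymm]
    exact (isSymm_diagonal _).add (hA.smul σ)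
  · rw [star_trivial, dotProduct_diagonal_degrees_add_smul_mulVec hA hσ]
    exact mul_nonneg (by norm_num) (sum_nonneg fun i _ => sum_nonneg fun j _ =>
      mul_nonneg (hnonneg i j) (sq_nonneg _))

theorem laplacian_mulVec_one : laplacian A *ᵥ (fun _ => 1) = 0 := by
  rw [laplacian, sub_mulVec, sub_eq_zero]
  funext i
  rw [mulVec_diagonal]
  simp [mulVec, dotProduct, degrees]

theorem one_sub_lazyWalk (hpos : ∀ i, 0 < degrees A i) :
    1 - lazyWalk A = (1 / 2 : ℝ) • (laplacian A * diagonal fun i => (degrees A i)⁻¹) := by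
  ext i j
  have hne := (hpos i).ne'
  by_cases hij : i = j
  · subst hij; simp [lazyWalk, laplacian]; field_simp; ring
  · simp [lazyWalk, laplacian, hij]

theorem lazyWalk_mulVec_stationary (hpos : ∀ i, 0 < degrees A i) :
    lazyWalk A *ᵥ stationary A = stationary A := by
  have hscaled : (diagonal fun i => (degrees A i)⁻¹) *ᵥ stationary A
      = fun _ => (∑ i, degrees A i)⁻¹ := by
    funext i
    rw [mulVec_diagonal, stationary, div_eq_mul_inv, inv_mul_cancel_left₀ (hpos i).ne']
  have hA : A *ᵥ (fun _ => (∑ i, degrees A i)⁻¹) = stationary A := by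
    funext i
    simp only [mulVec, dotProduct, ← sum_mul, stationary, div_eq_mul_inv, degrees]
  rw [lazyWalk, add_mulVec, smul_mulVec, smul_mulVec, one_mulVec, ← mulVec_mulVec, hscaled, hA,
    ← add_smul]
  norm_num

theorem lazyWalk_pow_mulVec_stationary (hpos : ∀ i, 0 < degrees A i) (t : ℕ) :
    lazyWalk A ^ t *ᵥ stationary A = stationary A := by
  induction t with
  | zero => rw [pow_zero, one_mulVec]
  | succ t ih => rw [pow_succ, ← mulVec_mulVec, lazyWalk_mulVec_stationary hpos, ih]

theorem symLazyWalk_posSemidef (hA : A.IsSymm) (hnonneg : ∀ i j, 0 ≤ A i j) :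
    (symLazyWalk A).PosSemidef := by
  have h := (posSemidef_diagonal_degrees_add_smul hA hnonneg (σ := 1) (by norm_num))
    |>.conjTranspose_mul_mul_same (diagonal (sqrtDegrees A)⁻¹)
  rw [one_smul, diagonal_conjTranspose, star_trivial] at h
  exact h.smul (by norm_num)

theorem one_sub_symLazyWalk (hpos : ∀ i, 0 < degrees A i) : 1 - symLazyWalk A
    = (1 / 2 : ℝ) • (diagonal (sqrtDegrees A)⁻¹ * laplacian A * diagonal (sqrtDegrees A)⁻¹) := by
  ext i j
  have hne := sqrtDegrees_ne_zero hpos i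
  have hsq := sqrtDegrees_mul_self hpos i
  by_cases hij : i = j
  · subst hij; simp [symLazyWalk, laplacian, ← hsq]; field_simp; ring
  · simp [symLazyWalk, laplacian, hij]

theorem one_sub_symLazyWalk_posSemidef (hA : A.IsSymm) (hnonneg : ∀ i j, 0 ≤ A i j)
    (hpos : ∀ i, 0 < degrees A i) : (1 - symLazyWalk A).PosSemidef := by
  have h := (posSemidef_diagonal_degrees_add_smul hA hnonneg (σ := -1) (by norm_num))
    |>.conjTranspose_mul_mul_same (diagonal (sqrtDegrees A)⁻¹)
  rw [neg_one_smul, ← sub_eq_add_neg, diagonal_conjTranspose, star_trivial] at h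
  rw [one_sub_symLazyWalk hpos]
  exact h.smul (by norm_num)

theorem symLazyWalk_semiconjBy (hpos : ∀ i, 0 < degrees A i) :
    SemiconjBy (diagonal (sqrtDegrees A)) (symLazyWalk A) (lazyWalk A) := by
  ext i j
  have hi := sqrtDegrees_ne_zero hpos i
  have hj := sqrtDegrees_ne_zero hpos j
  have hsq := sqrtDegrees_mul_self hpos j
  by_cases hij : i = j
  · subst hij; simp [symLazyWalk, lazyWalk, ← hsq]; field_simp
  · simp [symLazyWalk, lazyWalk, hij, ← hsq]; field_simp

theorem lazyWalk_pow (hpos : ∀ i, 0 < degrees A i) (t : ℕ) :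
    lazyWalk A ^ t
      = diagonal (sqrtDegrees A) * symLazyWalk A ^ t * diagonal (sqrtDegrees A)⁻¹ := by
  have hinv : diagonal (sqrtDegrees A) * diagonal (sqrtDegrees A)⁻¹ = 1 := by
    rw [diagonal_mul_diagonal, ← diagonal_one]
    exact congrArg diagonal (funext fun i => mul_inv_cancel₀ (sqrtDegrees_ne_zero hpos i))
  rw [((symLazyWalk_semiconjBy hpos).pow_right t).eq, Matrix.mul_assoc, hinv, Matrix.mul_one]

theorem dotProduct_mulVec_eq_zero_of_symLazyWalk_mulVec (hpos : ∀ i, 0 < degrees A i)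
    (hker : ∀ x, laplacian A *ᵥ x = 0 → ∃ c : ℝ, ∀ i, x i = c) {v w : ι → ℝ}
    (hv : symLazyWalk A *ᵥ v = v) (hw : ∑ i, w i = 0) :
    v ⬝ᵥ (diagonal (sqrtDegrees A)⁻¹ *ᵥ w) = 0 := by
  have hLv : laplacian A *ᵥ (diagonal (sqrtDegrees A)⁻¹ *ᵥ v) = 0 := by
    have h : (1 - symLazyWalk A) *ᵥ v = 0 := by rw [sub_mulVec, one_mulVec, hv, sub_self]
    rw [one_sub_symLazyWalk hpos, smul_mulVec, ← mulVec_mulVec, ← mulVec_mulVec,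
      smul_eq_zero_iff_right (by norm_num)] at h
    funext i
    have hi := congrFun h i
    rw [mulVec_diagonal] at hi
    exact (mul_eq_zero.mp hi).resolve_left (inv_ne_zero (sqrtDegrees_ne_zero hpos i))
  obtain ⟨c, hc⟩ := hker _ hLv
  have hc' : ∀ i, v i * (sqrtDegrees A)⁻¹ i = c := fun i => by
    rw [mul_comm, ← mulVec_diagonal]; exact hc i
  rw [dotProduct_mulVec]
  simp only [dotProduct, vecMul_diagonal, hc', ← mul_sum, hw, mul_zero]

theorem summable_lazyWalk_pow_mulVec (hA : A.IsSymm) (hnonneg : ∀ i j, 0 ≤ A i j)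
    (hpos : ∀ i, 0 < degrees A i) (hker : ∀ x, laplacian A *ᵥ x = 0 → ∃ c : ℝ, ∀ i, x i = c)
    {w : ι → ℝ} (hw : ∑ i, w i = 0) : Summable fun t : ℕ => lazyWalk A ^ t *ᵥ w := by
  have hS := symLazyWalk_posSemidef hA hnonneg
  have hsum := hS.isHermitian.summable_pow_mulVec
    (fun i => ⟨by linarith [hS.eigenvalues_nonneg i],
      hS.isHermitian.eigenvalues_le_one (one_sub_symLazyWalk_posSemidef hA hnonneg hpos) i⟩)
    (fun v hv => dotProduct_mulVec_eq_zero_of_symLazyWalk_mulVec hpos hker hv hw)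
  simpa only [lazyWalk_pow hpos, ← mulVec_mulVec]
    using (hsum.hasSum.matrix_mulVec (diagonal (sqrtDegrees A))).summable

end WeightedGraph

end

open WeightedGraph

theorem pseudoinverse_power_series_general (n : ℕ) (A : Matrix (Fin n) (Fin n) ℝ)
    (hsym : A.IsSymm) (hnonneg : ∀ i j, 0 ≤ A i j)
    (hdpos : ∀ i, 0 < ∑ j, A i j)
    (L : Matrix (Fin n) (Fin n) ℝ)
    (hL : L = Matrix.diagonal (fun i => ∑ j, A i j) - A)
    (hker : ∀ x : Fin n → ℝ, L.mulVec x = 0 → ∃ c : ℝ, ∀ i, x i = c)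
    (Lp : Matrix (Fin n) (Fin n) ℝ)
    (hmp1 : L * Lp * L = L)
    (hmp4 : (Lp * L).IsSymm)
    (X : Matrix (Fin n) (Fin n) ℝ)
    (hX : X = (1 / 2 : ℝ) • (1 : Matrix (Fin n) (Fin n) ℝ)
        + (1 / 2 : ℝ) • (A * Matrix.diagonal (fun i => (∑ j, A i j)⁻¹)))
    (pi : Fin n → ℝ) (hpi : pi = fun i => (∑ j, A i j) / ∑ i, ∑ j, A i j)
    (u : Fin n) :
    Summable (fun t : ℕ => (X ^ t).mulVec (Pi.single u 1) - pi) ∧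
    Lp.mulVec (Pi.single u 1 - pi)
      = (1 / 2 : ℝ) •
          (((1 : Matrix (Fin n) (Fin n) ℝ)
              - ((n : ℝ)⁻¹) • Matrix.of (fun _ _ : Fin n => (1 : ℝ)))
            * Matrix.diagonal (fun i => (∑ j, A i j)⁻¹)).mulVec
          (∑' t : ℕ, ((X ^ t).mulVec (Pi.single u 1) - pi)) := by
  obtain rfl : L = laplacian A := hL
  obtain rfl : X = lazyWalk A := hX
  obtain rfl : pi = stationary A := hpi
  have hpos : ∀ i, 0 < degrees A i := hdpos
  have : Nonempty (Fin n) := ⟨u⟩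
  set w := Pi.single u (1 : ℝ) - stationary A
  have hw : ∑ i, w i = 0 := by simp [w, sum_stationary hpos]
  have hterm : ∀ t : ℕ, lazyWalk A ^ t *ᵥ Pi.single u 1 - stationary A = lazyWalk A ^ t *ᵥ w :=
    fun t => by rw [mulVec_sub, lazyWalk_pow_mulVec_stationary hpos]
  simp only [hterm]
  have hsum := summable_lazyWalk_pow_mulVec hsym hnonneg hpos hker hw
  refine ⟨hsum, ?_⟩
  have hLT : laplacian A *ᵥ ((1 / 2 : ℝ) •
      ((diagonal fun i => (degrees A i)⁻¹) *ᵥ ∑' t : ℕ, lazyWalk A ^ t *ᵥ w)) = w := by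
    rw [mulVec_smul, mulVec_mulVec, ← smul_mulVec, ← one_sub_lazyWalk hpos, sub_mulVec,
      one_mulVec]
    exact sub_mulVec_eq_of_hasSum_pow_mulVec hsum.hasSum
  conv_lhs => rw [← hLT]
  rw [mulVec_mulVec, mul_eq_one_sub_of_ker_eq_const hmp1 hmp4 laplacian_mulVec_one hker,
    Fintype.card_fin, mulVec_smul, ← mulVec_mulVec]
  rfl

/-- for a connected weighted graph with stationary distribution
`π = D1/(1ᵀD1)`, the series `∑_{t≥0} (X^t 1_u - π)` converges and
`L⁺ (1_u - π) = (1/2) Π D⁻¹ ∑_{t=0}^∞ (X^t 1_u - π)`,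
where `X = (1/2)I + (1/2)AD⁻¹` and `Π = I - (1/n) 1 1ᵀ`. -/
theorem pseudoinverse_power_series (n : ℕ) (A : Matrix (Fin n) (Fin n) ℝ)
    (hsym : A.IsSymm) (hnonneg : ∀ i j, 0 ≤ A i j) (hloop : ∀ i, A i i = 0)
    (hdpos : ∀ i, 0 < ∑ j, A i j)
    (L : Matrix (Fin n) (Fin n) ℝ)
    (hL : L = Matrix.diagonal (fun i => ∑ j, A i j) - A)
    (hker : ∀ x : Fin n → ℝ, L.mulVec x = 0 → ∃ c : ℝ, ∀ i, x i = c)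
    (Lp : Matrix (Fin n) (Fin n) ℝ)
    (hmp1 : L * Lp * L = L) (hmp2 : Lp * L * Lp = Lp)
    (hmp3 : (L * Lp).IsSymm) (hmp4 : (Lp * L).IsSymm)
    (X : Matrix (Fin n) (Fin n) ℝ)
    (hX : X = (1 / 2 : ℝ) • (1 : Matrix (Fin n) (Fin n) ℝ)
        + (1 / 2 : ℝ) • (A * Matrix.diagonal (fun i => (∑ j, A i j)⁻¹)))
    (pi : Fin n → ℝ) (hpi : pi = fun i => (∑ j, A i j) / ∑ i, ∑ j, A i j)
    (u : Fin n) :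
    Summable (fun t : ℕ => (X ^ t).mulVec (Pi.single u 1) - pi) ∧
    Lp.mulVec (Pi.single u 1 - pi)
      = (1 / 2 : ℝ) •
          (((1 : Matrix (Fin n) (Fin n) ℝ)
              - ((n : ℝ)⁻¹) • Matrix.of (fun _ _ : Fin n => (1 : ℝ)))
            * Matrix.diagonal (fun i => (∑ j, A i j)⁻¹)).mulVec
          (∑' t : ℕ, ((X ^ t).mulVec (Pi.single u 1) - pi)) :=
  pseudoinverse_power_series_general n A hsym hnonneg hdpos L hL hker Lp hmp1 hmp4 X hX pi hpi u
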